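/- Let φ : ℂ[x₁, x₂, y, z] → ℂ[a₁, b₁] × ℂ[a₂, b₂] be the ℂ-algebra homomorphism into the product ring determined by x₁ ↦ (0, b₂ − a₂), x₂ ↦ (b₁ − a₁, 0), y ↦ (−a₁b₁, −a₂b₂), z ↦ (−a₁²b₁, a₂²b₂), and let R ⊆ ℂ[a₁, b₁] × ℂ[a₂, b₂] be the ℂ-subalgebra generated by u = (a₁, a₂) and v = (b₁, a₂ − b₂). Then for each of the thirteen polynomials x₁² + x₂² − y, x₁x₂, x₁y + x₂y, x₁³ − x₂³ + 3x₂y + z, x₁x₂², x₁²x₂, x₁z − x₂z, x₁²y − x₂²y − x₂z, x₁x₂y, x₁x₂³, x₂y² − x₁²z, x₁y² + x₂²z, x₁x₂z, its image under φ lies in R. (For example, φ(x₁² + x₂² − y) = u² − uv + v² and φ(x₁y + x₂y) = u²v − uv².) -/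

import Mathlib

open MvPolynomial

/-- The residue map `φ : ℂ[x₁,x₂,y,z] → ℂ[a₁,b₁] × ℂ[a₂,b₂]`, determined by
`x₁ ↦ (0, b₂ − a₂)`, `x₂ ↦ (b₁ − a₁, 0)`, `y ↦ (−a₁b₁, −a₂b₂)`, `z ↦ (−a₁²b₁, a₂²b₂)`;
in each factor `X 0 = aᵢ` and `X 1 = bᵢ`. -/
noncomputable def resPhi :
    MvPolynomial (Fin 4) ℂ →ₐ[ℂ] MvPolynomial (Fin 2) ℂ × MvPolynomial (Fin 2) ℂ :=
  aeval ![((0 : MvPolynomial (Fin 2) ℂ), X 1 - X 0),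
          (X 1 - X 0, (0 : MvPolynomial (Fin 2) ℂ)),
          (-(X 0 * X 1), -(X 0 * X 1)),
          (-((X 0) ^ 2 * X 1), (X 0) ^ 2 * X 1)]

/-- `u = (a₁, a₂)`. -/
noncomputable def uInv : MvPolynomial (Fin 2) ℂ × MvPolynomial (Fin 2) ℂ := (X 0, X 0)

/-- `v = (b₁, a₂ − b₂)`. -/
noncomputable def vInv : MvPolynomial (Fin 2) ℂ × MvPolynomial (Fin 2) ℂ := (X 1, X 0 - X 1)

/-- The thirteen generators of the canonical ring, as polynomials in
`ℂ[x₁,x₂,y,z]` with `X 0 = x₁`, `X 1 = x₂`, `X 2 = y`, `X 3 = z`. -/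
noncomputable def canGens : Set (MvPolynomial (Fin 4) ℂ) :=
  { (X 0) ^ 2 + (X 1) ^ 2 - X 2,
    X 0 * X 1,
    X 0 * X 2 + X 1 * X 2,
    (X 0) ^ 3 - (X 1) ^ 3 + 3 * (X 1 * X 2) + X 3,
    X 0 * (X 1) ^ 2,
    (X 0) ^ 2 * X 1,
    X 0 * X 3 - X 1 * X 3,
    (X 0) ^ 2 * X 2 - (X 1) ^ 2 * X 2 - X 1 * X 3,
    X 0 * X 1 * X 2,
    X 0 * (X 1) ^ 3,
    X 1 * (X 2) ^ 2 - (X 0) ^ 2 * X 3,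
    X 0 * (X 2) ^ 2 + (X 1) ^ 2 * X 3,
    X 0 * X 1 * X 3 }

theorem aeval_mem_adjoin_pair {R A : Type*} [CommSemiring R] [CommSemiring A] [Algebra R A]
    (x y : A) (p : MvPolynomial (Fin 2) R) : aeval ![x, y] p ∈ Algebra.adjoin R {x, y} := by
  rw [← Matrix.range_cons_cons_empty x y ![], Algebra.adjoin_range_eq_range_aeval]
  exact AlgHom.mem_range_self _ p

theorem resPhi_mem_adjoin_of_eq_aeval {q : MvPolynomial (Fin 4) ℂ} (p : MvPolynomial (Fin 2) ℂ)
    (h : resPhi q = aeval ![uInv, vInv] p) :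
    resPhi q ∈ Algebra.adjoin ℂ ({uInv, vInv} :
      Set (MvPolynomial (Fin 2) ℂ × MvPolynomial (Fin 2) ℂ)) :=
  h ▸ aeval_mem_adjoin_pair uInv vInv p

/-- The image under `φ` of each of the thirteen canonical-ring generators lies in the
subalgebra `R = ℂ[u, v]` generated by `u = (a₁, a₂)` and `v = (b₁, a₂ − b₂)`. -/
theorem stmt_5 :
    ∀ q ∈ canGens, resPhi q ∈ Algebra.adjoin ℂ ({uInv, vInv} :
      Set (MvPolynomial (Fin 2) ℂ × MvPolynomial (Fin 2) ℂ)) := by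
  intro q hq
  simp only [canGens, Set.mem_insert_iff, Set.mem_singleton_iff] at hq
  -- The five multiples of `x₁x₂` map to `0`, as `x₁` and `x₂` vanish on different factors.
  rcases hq with rfl | rfl | rfl | rfl | rfl | rfl | rfl | rfl | rfl | rfl | rfl | rfl | rfl <;>
  [ refine resPhi_mem_adjoin_of_eq_aeval (X 0 ^ 2 - X 0 * X 1 + X 1 ^ 2) ?_;
    refine resPhi_mem_adjoin_of_eq_aeval 0 ?_;
    refine resPhi_mem_adjoin_of_eq_aeval (X 0 ^ 2 * X 1 - X 0 * X 1 ^ 2) ?_;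
    refine resPhi_mem_adjoin_of_eq_aeval (X 0 ^ 3 - X 0 ^ 2 * X 1 - X 1 ^ 3) ?_;
    refine resPhi_mem_adjoin_of_eq_aeval 0 ?_;
    refine resPhi_mem_adjoin_of_eq_aeval 0 ?_;
    refine resPhi_mem_adjoin_of_eq_aeval (X 0 ^ 2 * X 1 ^ 2 - X 0 ^ 3 * X 1) ?_;
    refine resPhi_mem_adjoin_of_eq_aeval (X 0 * X 1 ^ 3 - X 0 ^ 2 * X 1 ^ 2) ?_;
    refine resPhi_mem_adjoin_of_eq_aeval 0 ?_;
    refine resPhi_mem_adjoin_of_eq_aeval 0 ?_;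
    refine resPhi_mem_adjoin_of_eq_aeval (X 0 ^ 2 * X 1 ^ 3 - X 0 ^ 3 * X 1 ^ 2) ?_;
    refine resPhi_mem_adjoin_of_eq_aeval
      (2 * X 0 ^ 3 * X 1 ^ 2 - X 0 ^ 2 * X 1 ^ 3 - X 0 ^ 4 * X 1) ?_;
    refine resPhi_mem_adjoin_of_eq_aeval 0 ?_ ] <;>
  · refine Prod.ext ?_ ?_ <;>
    simp only [resPhi, uInv, vInv, map_add, map_sub, map_mul, map_pow, map_ofNat, map_zero,
      aeval_X, Matrix.cons_val, Prod.fst_add, Prod.fst_sub, Prod.fst_mul, Prod.pow_fst,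
      Prod.fst_ofNat, Prod.fst_zero, Prod.snd_add, Prod.snd_sub, Prod.snd_mul, Prod.pow_snd,
      Prod.snd_ofNat, Prod.snd_zero] <;>
    ring
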